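/- arXiv:2404.14221 — 4 statements merged into one kernel-verified Lean document; each statement's English description precedes it below -/
import Mathlib

section
/- For any two probability distributions P and Q on a finite alphabet X and any α ≥ 0, the Rényi divergence of order α/(1+α) satisfies the variational formula D_{α/(1+α)}(P‖Q) = min over probability distributions V on X of (α·D(V‖P) + D(V‖Q)). -/
open Real Finset Filter

open scoped Classical

variable {X : Type*}

def IsProb [Fintype X] (P : X → ℝ) : Prop := (∀ x, 0 ≤ P x) ∧ ∑ x, P x = 1

noncomputable def KL [Fintype X] (P Q : X → ℝ) : ℝ := ∑ x, P x * Real.log (P x / Q x)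

noncomputable def GJS [Fintype X] (P Q : X → ℝ) (α : ℝ) : ℝ :=
  α * KL P (fun x => (α * P x + Q x) / (1 + α)) + KL Q (fun x => (α * P x + Q x) / (1 + α))

noncomputable def Renyi [Fintype X] (β : ℝ) (P Q : X → ℝ) : ℝ :=
  (1 / (β - 1)) * Real.log (∑ x, P x ^ β * Q x ^ (1 - β))

noncomputable def scoreG [Fintype X] {M : ℕ} (Q : Fin M → X → ℝ) (i : Fin M) : ℝ :=
  ∑ j ∈ Finset.univ.erase i,
    KL (Q j) (fun x => (∑ l ∈ Finset.univ.erase i, Q l x) / ((M : ℝ) - 1))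

/-!
Write `β = α / (1 + α)`, so that `α = (1 + α) β` and `1 = (1 + α) (1 - β)`. For every distribution
`V`, `β D(V‖P) + (1 - β) D(V‖Q) = D(V‖W) - log Z`, where `Z = ∑ P^β Q^(1-β)` and
`W ∝ P^β Q^(1-β)` is the tilted distribution. By Gibbs' inequality the right side is minimised,
with value `-log Z = (1 - β) D_β(P‖Q)`, exactly at `V = W`; multiplying by `1 + α` gives the claim.
-/

section

variable [Fintype X]

theorem IsProb.nonempty {P : X → ℝ} (hP : IsProb P) : Nonempty X := by
  by_contra h
  simpa [not_nonempty_iff.mp h] using hP.2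

theorem KL_self (P : X → ℝ) : KL P P = 0 := by
  refine Finset.sum_eq_zero fun x _ => ?_
  by_cases hx : P x = 0 <;> simp [hx]

theorem KL_nonneg {V W : X → ℝ} (hV : ∀ x, 0 ≤ V x) (hW : ∀ x, 0 < W x)
    (hsum : ∑ x, W x ≤ ∑ x, V x) : 0 ≤ KL V W := by
  have hterm : ∀ x, V x - W x ≤ V x * log (V x / W x) := by
    intro x
    rcases (hV x).eq_or_lt with hv | hv
    · simp [← hv, (hW x).le]
    · have hlog : log (W x / V x) ≤ W x / V x - 1 := log_le_sub_one_of_pos (div_pos (hW x) hv)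
      have hflip : log (W x / V x) = -log (V x / W x) := by rw [← log_inv, inv_div]
      calc V x - W x = V x * (1 - W x / V x) := by field_simp
        _ ≤ V x * log (V x / W x) := by gcongr; linarith
  calc 0 ≤ ∑ x, (V x - W x) := by rw [Finset.sum_sub_distrib]; linarith
    _ ≤ KL V W := Finset.sum_le_sum fun x _ => hterm x

noncomputable def renyiSum (β : ℝ) (P Q : X → ℝ) : ℝ := ∑ x, P x ^ β * Q x ^ (1 - β)

noncomputable def tilted (β : ℝ) (P Q : X → ℝ) (x : X) : ℝ :=
  P x ^ β * Q x ^ (1 - β) / renyiSum β P Q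

variable {P Q : X → ℝ} (hPpos : ∀ x, 0 < P x) (hQpos : ∀ x, 0 < Q x)
include hPpos hQpos

theorem renyiSum_pos [Nonempty X] (β : ℝ) : 0 < renyiSum β P Q :=
  Finset.sum_pos (fun x _ => by have := hPpos x; have := hQpos x; positivity) univ_nonempty

theorem tilted_pos [Nonempty X] (β : ℝ) (x : X) : 0 < tilted β P Q x := by
  have := hPpos x; have := hQpos x; have := renyiSum_pos hPpos hQpos β
  unfold tilted; positivity

theorem isProb_tilted [Nonempty X] (β : ℝ) : IsProb (tilted β P Q) :=
  ⟨fun x => (tilted_pos hPpos hQpos β x).le, by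
    simp only [tilted, ← Finset.sum_div]; exact div_self (renyiSum_pos hPpos hQpos β).ne'⟩

theorem log_tilted [Nonempty X] (β : ℝ) (x : X) : log (tilted β P Q x) =
    β * log (P x) + (1 - β) * log (Q x) - log (renyiSum β P Q) := by
  have := hPpos x; have := hQpos x
  rw [tilted, log_div (by positivity) (renyiSum_pos hPpos hQpos β).ne',
    log_mul (by positivity) (by positivity), log_rpow (hPpos x), log_rpow (hQpos x)]

theorem mul_KL_add_mul_KL_eq [Nonempty X] (β : ℝ) {V : X → ℝ} (hV : ∑ x, V x = 1) :
    β * KL V P + (1 - β) * KL V Q = KL V (tilted β P Q) - log (renyiSum β P Q) := by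
  have hlogZ : log (renyiSum β P Q) = ∑ x, V x * log (renyiSum β P Q) := by
    rw [← Finset.sum_mul, hV, one_mul]
  rw [hlogZ]
  simp only [KL, Finset.mul_sum, ← Finset.sum_add_distrib, ← Finset.sum_sub_distrib]
  refine Finset.sum_congr rfl fun x _ => ?_
  by_cases hv : V x = 0
  · simp [hv]
  rw [log_div hv (hPpos x).ne', log_div hv (hQpos x).ne',
    log_div hv (tilted_pos hPpos hQpos β x).ne', log_tilted hPpos hQpos β x]
  ring

theorem isLeast_mul_KL_add_mul_KL [Nonempty X] (β : ℝ) :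
    IsLeast {v : ℝ | ∃ V : X → ℝ, IsProb V ∧ v = β * KL V P + (1 - β) * KL V Q}
      (-log (renyiSum β P Q)) := by
  refine ⟨⟨tilted β P Q, isProb_tilted hPpos hQpos β, ?_⟩, ?_⟩
  · rw [mul_KL_add_mul_KL_eq hPpos hQpos β (isProb_tilted hPpos hQpos β).2, KL_self]
    ring
  · rintro v ⟨V, hV, rfl⟩
    have := KL_nonneg hV.1 (tilted_pos hPpos hQpos β) (by
      rw [hV.2, (isProb_tilted hPpos hQpos β).2])
    rw [mul_KL_add_mul_KL_eq hPpos hQpos β hV.2]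
    linarith

end

theorem renyi_variational_general [Fintype X] (P Q : X → ℝ) (hP : IsProb P)
    (hPpos : ∀ x, 0 < P x) (hQpos : ∀ x, 0 < Q x) (α : ℝ) (hα : 0 ≤ α) :
    IsLeast {v : ℝ | ∃ V : X → ℝ, IsProb V ∧ v = α * KL V P + KL V Q}
      (Renyi (α / (1 + α)) P Q) := by
  have := hP.nonempty
  set β := α / (1 + α)
  have hα₁ : 0 < 1 + α := by linarith
  have hβ : (1 + α) * β = α := mul_div_cancel₀ _ hα₁.ne'
  have hRenyi : Renyi β P Q = (1 + α) * -log (renyiSum β P Q) := by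
    rw [Renyi, renyiSum, show β - 1 = -(1 + α)⁻¹ by simp only [β]; field_simp; ring]
    field_simp
  obtain ⟨⟨W, hW, hW_eq⟩, hlower⟩ := isLeast_mul_KL_add_mul_KL hPpos hQpos β
  refine ⟨⟨W, hW, ?_⟩, ?_⟩
  · rw [hRenyi, hW_eq]
    linear_combination (KL W P - KL W Q) * hβ
  · rintro v ⟨V, hV, rfl⟩
    calc Renyi β P Q = (1 + α) * -log (renyiSum β P Q) := hRenyi
      _ ≤ (1 + α) * (β * KL V P + (1 - β) * KL V Q) := by gcongr; exact hlower ⟨V, hV, rfl⟩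
      _ = α * KL V P + KL V Q := by linear_combination (KL V P - KL V Q) * hβ

theorem renyi_variational [Fintype X] (P Q : X → ℝ) (hP : IsProb P) (hQ : IsProb Q)
    (hPpos : ∀ x, 0 < P x) (hQpos : ∀ x, 0 < Q x) (α : ℝ) (hα : 0 ≤ α) :
    IsLeast {v : ℝ | ∃ V : X → ℝ, IsProb V ∧ v = α * KL V P + KL V Q}
      (Renyi (α / (1 + α)) P Q) :=
  renyi_variational_general P Q hP hPpos hQpos α hα
end

section
/- For any two fully supported probability distributions P and Q on a finite alphabet X and any α ≥ 0, the Rényi divergence of order α/(1+α) upper bounds the generalized Jensen-Shannon divergence: D_{α/(1+α)}(Q‖P) ≥ GJS(P,Q,α). -/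
/-! With `β = α / (1 + α)` and `M = β P + (1 - β) Q` one has
`GJS(P, Q, α) = (1 + α) (β D(P‖M) + (1 - β) D(Q‖M))` and `D_β(Q‖P) = -(1 + α) log S`, where
`S = ∑ Q^β P^(1-β)`. Pointwise, the Jensen gap `β p log p + (1 - β) q log q - m log m` of `x log x`
(with `m = β p + (1 - β) q`) is at most the weighted AM–GM gap `(1 - β) p + β q - q^β p^(1-β)`:
as a function of `p` the difference is convex, its second derivative being nonnegative by AM–GM
again, and it has a double zero at `p = q`. Summing over the alphabet gives
`β D(P‖M) + (1 - β) D(Q‖M) ≤ 1 - S ≤ -log S`. -/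

open Real Finset Filter

open scoped Classical

variable {X : Type*}

noncomputable def renyiGJSDefect (β q p : ℝ) : ℝ :=
  (1 - β) * p + β * q - q ^ β * p ^ (1 - β)
    - (β * p * log p + (1 - β) * q * log q
      - (β * p + (1 - β) * q) * log (β * p + (1 - β) * q))

noncomputable def renyiGJSDefectDeriv (β q p : ℝ) : ℝ :=
  (1 - β) * (1 - q ^ β * p ^ (-β)) + β * (log (β * p + (1 - β) * q) - log p)

section Defect

variable {β q p : ℝ}

lemma mix_pos (hβ0 : 0 ≤ β) (hβ1 : β ≤ 1) (hq : 0 < q) (hp : 0 < p) :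
    0 < β * p + (1 - β) * q := by
  rcases hβ0.eq_or_lt with rfl | hβ
  · simpa using hq
  · nlinarith

lemma hasDerivAt_renyiGJSDefect (hβ0 : 0 ≤ β) (hβ1 : β ≤ 1) (hq : 0 < q) (hp : 0 < p) :
    HasDerivAt (renyiGJSDefect β q) (renyiGJSDefectDeriv β q p) p := by
  have hm : HasDerivAt (fun x => β * x + (1 - β) * q) β p := by
    simpa using ((hasDerivAt_id p).const_mul β).add_const ((1 - β) * q)
  have hmlogm := (hasDerivAt_mul_log (mix_pos hβ0 hβ1 hq hp).ne').comp p hm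
  have hplogp := (hasDerivAt_mul_log hp.ne').const_mul β
  have hpow := (hasDerivAt_rpow_const (p := 1 - β) (Or.inl hp.ne')).const_mul (q ^ β)
  have h := ((((hasDerivAt_id p).const_mul (1 - β)).sub hpow).sub
    ((hplogp.add_const ((1 - β) * q * log q)).sub hmlogm)).const_add (β * q)
  refine h.congr_deriv ?_ |>.congr_of_eventuallyEq (Eventually.of_forall fun x => ?_)
  · rw [renyiGJSDefectDeriv, show 1 - β - 1 = -β by ring]; ring
  · simp only [renyiGJSDefect, Function.comp, id, Pi.sub_apply]; ring

lemma hasDerivAt_renyiGJSDefectDeriv (hβ0 : 0 ≤ β) (hβ1 : β ≤ 1) (hq : 0 < q) (hp : 0 < p) :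
    HasDerivAt (renyiGJSDefectDeriv β q)
      (β * (1 - β) * (q ^ β * p ^ (-β) - q / (β * p + (1 - β) * q)) / p) p := by
  have hm : HasDerivAt (fun x => β * x + (1 - β) * q) β p := by
    simpa using ((hasDerivAt_id p).const_mul β).add_const ((1 - β) * q)
  have hmpos := mix_pos hβ0 hβ1 hq hp
  have hpow := (hasDerivAt_rpow_const (p := -β) (Or.inl hp.ne')).const_mul (q ^ β)
  have h := ((hpow.const_sub 1).const_mul (1 - β)).add
    (((hm.log hmpos.ne').sub (hasDerivAt_log hp.ne')).const_mul β)
  refine h.congr_deriv ?_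
  rw [rpow_sub_one hp.ne']
  field_simp
  ring

lemma div_mix_le_rpow_mul_rpow_neg (hβ0 : 0 ≤ β) (hβ1 : β ≤ 1) (hq : 0 < q) (hp : 0 < p) :
    q / (β * p + (1 - β) * q) ≤ q ^ β * p ^ (-β) := by
  have hamgm : p ^ β * q ^ (1 - β) ≤ β * p + (1 - β) * q :=
    geom_mean_le_arith_mean2_weighted hβ0 (by linarith) hp.le hq.le (by ring)
  rw [div_le_iff₀ (mix_pos hβ0 hβ1 hq hp), rpow_neg hp.le]
  calc q = q ^ β * (p ^ β)⁻¹ * (p ^ β * q ^ (1 - β)) := by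
        field_simp
        rw [← rpow_add hq]
        simp
    _ ≤ q ^ β * (p ^ β)⁻¹ * (β * p + (1 - β) * q) := by gcongr

lemma renyiGJSDefect_self (q : ℝ) (hq : 0 < q) : renyiGJSDefect β q q = 0 := by
  have hqq : q ^ β * q ^ (1 - β) = q := by rw [← rpow_add hq]; simp
  simp only [renyiGJSDefect, show β * q + (1 - β) * q = q by ring, hqq]
  ring

lemma renyiGJSDefectDeriv_self (q : ℝ) (hq : 0 < q) : renyiGJSDefectDeriv β q q = 0 := by
  rw [renyiGJSDefectDeriv, ← rpow_add hq, show β * q + (1 - β) * q = q by ring]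
  simp

lemma renyiGJSDefect_nonneg (hβ0 : 0 ≤ β) (hβ1 : β ≤ 1) (hq : 0 < q) (hp : 0 < p) :
    0 ≤ renyiGJSDefect β q p := by
  have hconvex : ConvexOn ℝ (Set.Ioi 0) (renyiGJSDefect β q) := by
    refine convexOn_of_hasDerivWithinAt2_nonneg (convex_Ioi 0)
      (f' := renyiGJSDefectDeriv β q)
      (f'' := fun x => β * (1 - β) * (q ^ β * x ^ (-β) - q / (β * x + (1 - β) * q)) / x)
      (fun x hx => (hasDerivAt_renyiGJSDefect hβ0 hβ1 hq hx).continuousAt.continuousWithinAt)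
      (fun x hx => ?_) (fun x hx => ?_) (fun x hx => ?_)
    all_goals rw [interior_Ioi] at *
    · exact (hasDerivAt_renyiGJSDefect hβ0 hβ1 hq hx).hasDerivWithinAt
    · exact (hasDerivAt_renyiGJSDefectDeriv hβ0 hβ1 hq hx).hasDerivWithinAt
    · exact div_nonneg (mul_nonneg (mul_nonneg hβ0 (by linarith))
        (sub_nonneg.mpr (div_mix_le_rpow_mul_rpow_neg hβ0 hβ1 hq hx))) (le_of_lt hx)
  have hcrit : derivWithin (renyiGJSDefect β q) (Set.Ioi q) q = 0 := by
    rw [(hasDerivAt_renyiGJSDefect hβ0 hβ1 hq hq).hasDerivWithinAt.derivWithin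
      (uniqueDiffWithinAt_Ioi q), renyiGJSDefectDeriv_self q hq]
  have hmin := hconvex.isMinOn_of_rightDeriv_eq_zero (by rwa [interior_Ioi]) hcrit
  simpa [renyiGJSDefect_self q hq] using hmin (Set.mem_Ioi.mpr hp)

lemma mul_log_div_mix_add_le (hβ0 : 0 ≤ β) (hβ1 : β ≤ 1) (hq : 0 < q) (hp : 0 < p) :
    β * (p * log (p / (β * p + (1 - β) * q))) + (1 - β) * (q * log (q / (β * p + (1 - β) * q)))
      ≤ (1 - β) * p + β * q - q ^ β * p ^ (1 - β) := by
  have hm := (mix_pos hβ0 hβ1 hq hp).ne'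
  have h := renyiGJSDefect_nonneg hβ0 hβ1 hq hp
  rw [renyiGJSDefect] at h
  rw [log_div hp.ne' hm, log_div hq.ne' hm]
  linarith

end Defect

section Sum

variable [Fintype X] {P Q : X → ℝ} {β : ℝ}

lemma weighted_KL_mix_le_neg_log_sum_rpow (hP : ∑ x, P x = 1) (hQ : ∑ x, Q x = 1)
    (hPpos : ∀ x, 0 < P x) (hQpos : ∀ x, 0 < Q x) (hβ0 : 0 ≤ β) (hβ1 : β ≤ 1) :
    β * KL P (fun x => β * P x + (1 - β) * Q x) + (1 - β) * KL Q (fun x => β * P x + (1 - β) * Q x)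
      ≤ -log (∑ x, Q x ^ β * P x ^ (1 - β)) := by
  set S := ∑ x, Q x ^ β * P x ^ (1 - β)
  have hS : 0 < S := sum_pos (fun x _ => by have := hPpos x; have := hQpos x; positivity)
    (nonempty_of_sum_ne_zero (by rw [hP]; exact one_ne_zero))
  calc _ ≤ ∑ x, ((1 - β) * P x + β * Q x - Q x ^ β * P x ^ (1 - β)) := by
        rw [KL, KL, mul_sum, mul_sum, ← sum_add_distrib]
        exact sum_le_sum fun x _ => mul_log_div_mix_add_le hβ0 hβ1 (hQpos x) (hPpos x)
    _ = 1 - S := by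
        rw [sum_sub_distrib, sum_add_distrib, ← mul_sum, ← mul_sum, hP, hQ]
        ring
    _ ≤ -log S := by linarith [log_le_sub_one_of_pos hS]

end Sum

lemma GJS_eq_mul_weighted_KL [Fintype X] (P Q : X → ℝ) {α : ℝ} (hα : 1 + α ≠ 0) :
    GJS P Q α = (1 + α) * (α / (1 + α) * KL P (fun x => α / (1 + α) * P x + (1 - α / (1 + α)) * Q x)
      + (1 - α / (1 + α)) * KL Q (fun x => α / (1 + α) * P x + (1 - α / (1 + α)) * Q x)) := by
  have hmix : (fun x => (α * P x + Q x) / (1 + α))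
      = fun x => α / (1 + α) * P x + (1 - α / (1 + α)) * Q x := by
    ext x; field_simp; ring
  rw [GJS, hmix]
  field_simp
  ring

lemma Renyi_eq_neg_log_div [Fintype X] (P Q : X → ℝ) (β : ℝ) :
    Renyi β P Q = -log (∑ x, P x ^ β * Q x ^ (1 - β)) / (1 - β) := by
  rw [Renyi, ← neg_sub 1 β, div_neg]
  ring

theorem renyi_ge_gjs [Fintype X] (P Q : X → ℝ) (hP : IsProb P) (hQ : IsProb Q)
    (hPpos : ∀ x, 0 < P x) (hQpos : ∀ x, 0 < Q x) (α : ℝ) (hα : 0 ≤ α) :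
    GJS P Q α ≤ Renyi (α / (1 + α)) Q P := by
  have h1α : 0 < 1 + α := by linarith
  set β := α / (1 + α)
  have hβ0 : 0 ≤ β := div_nonneg hα h1α.le
  have hβ1 : β ≤ 1 := (div_le_one h1α).mpr (by linarith)
  have hβ : 1 - β = 1 / (1 + α) := by
    rw [eq_div_iff h1α.ne', sub_mul, div_mul_cancel₀ _ h1α.ne']
    ring
  calc GJS P Q α
      = (1 + α) * (β * KL P (fun x => β * P x + (1 - β) * Q x)
          + (1 - β) * KL Q (fun x => β * P x + (1 - β) * Q x)) :=
        GJS_eq_mul_weighted_KL P Q h1α.ne'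
    _ ≤ (1 + α) * -log (∑ x, Q x ^ β * P x ^ (1 - β)) := by
        gcongr
        exact weighted_KL_mix_le_neg_log_sum_rpow hP.2 hQ.2 hPpos hQpos hβ0 hβ1
    _ = Renyi β Q P := by
        rw [Renyi_eq_neg_log_div, hβ]
        field_simp
end

section
/- The generalized Jensen-Shannon divergence GJS(P,Q,α) is non-decreasing in α ≥ 0 for any two probability distributions P and Q on a finite alphabet. -/
open Real Finset Filter

open scoped Classical

variable {X : Type*}

/-! For `0 ≤ a ≤ b`, writing `M_α = (α P + Q) / (1 + α)`, one has the exact decomposition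
`GJS(b) = GJS(a) + (b - a) D(P ‖ M_b) + (1 + a) D(M_a ‖ M_b)`,
obtained by rewriting `D(· ‖ M_a) = D(· ‖ M_b) - Σ (·) log (M_a / M_b)` and using
`a P + Q = (1 + a) M_a`. Both extra terms are nonnegative by Gibbs' inequality. -/

noncomputable def mixture (P Q : X → ℝ) (α : ℝ) : X → ℝ :=
  fun x => (α * P x + Q x) / (1 + α)

section Mixture

variable {P Q : X → ℝ} {α : ℝ} {x : X}

lemma one_add_mul_mixture (hα : 1 + α ≠ 0) : (1 + α) * mixture P Q α x = α * P x + Q x :=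
  mul_div_cancel₀ _ hα

lemma mixture_nonneg (hα : 0 ≤ α) (hPx : 0 ≤ P x) (hQx : 0 ≤ Q x) :
    0 ≤ mixture P Q α x := by
  unfold mixture
  positivity

lemma mixture_eq_zero_iff (hα : 0 ≤ α) (hPx : 0 ≤ P x) (hQx : 0 ≤ Q x) :
    mixture P Q α x = 0 ↔ α * P x = 0 ∧ Q x = 0 := by
  rw [mixture, div_eq_zero_iff, or_iff_left (by linarith),
    add_eq_zero_iff_of_nonneg (mul_nonneg hα hPx) hQx]

lemma eq_zero_and_eq_zero_of_mixture_eq_zero (hα : 0 < α) (hPx : 0 ≤ P x) (hQx : 0 ≤ Q x)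
    (h : mixture P Q α x = 0) : P x = 0 ∧ Q x = 0 :=
  have ⟨hαP, hQ⟩ := (mixture_eq_zero_iff hα.le hPx hQx).1 h
  ⟨(mul_eq_zero.1 hαP).resolve_left hα.ne', hQ⟩

end Mixture

lemma mul_log_div_sub_mul_log_div {p m m' : ℝ} (hm : m = 0 → p = 0) (hm' : m' = 0 → p = 0) :
    p * log (p / m) - p * log (p / m') = p * log (m' / m) := by
  by_cases hp : p = 0
  · simp [hp]
  · rw [log_div hp (mt hm hp), log_div hp (mt hm' hp), log_div (mt hm' hp) (mt hm hp)]
    ring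

lemma sub_le_mul_log_div {p r : ℝ} (hp : 0 ≤ p) (hr : 0 ≤ r) (hpr : r = 0 → p = 0) :
    p - r ≤ p * log (p / r) := by
  rcases hp.eq_or_lt with rfl | hp
  · simpa using hr
  have hr : 0 < r := hr.lt_of_ne' fun h => hp.ne' (hpr h)
  calc p - r = p * (1 - (p / r)⁻¹) := by field_simp
    _ ≤ p * log (p / r) := by gcongr; exact one_sub_inv_le_log_of_pos (div_pos hp hr)

section KL

variable [Fintype X] {P R S : X → ℝ}

lemma kl_nonneg (hP : ∀ x, 0 ≤ P x) (hR : ∀ x, 0 ≤ R x) (hPR : ∀ x, R x = 0 → P x = 0)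
    (hsum : ∑ x, R x ≤ ∑ x, P x) : 0 ≤ KL P R := by
  have h := Finset.sum_le_sum fun x (_ : x ∈ univ) => sub_le_mul_log_div (hP x) (hR x) (hPR x)
  rw [sum_sub_distrib] at h
  exact (sub_nonneg.2 hsum).trans h

lemma kl_sub_kl (hR : ∀ x, R x = 0 → P x = 0) (hS : ∀ x, S x = 0 → P x = 0) :
    KL P R - KL P S = ∑ x, P x * log (S x / R x) := by
  rw [KL, KL, ← sum_sub_distrib]
  exact sum_congr rfl fun x _ => mul_log_div_sub_mul_log_div (hR x) (hS x)

end KL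

section GJS

variable [Fintype X] {P Q : X → ℝ}

lemma gjs_eq (α : ℝ) : GJS P Q α = α * KL P (mixture P Q α) + KL Q (mixture P Q α) := rfl

lemma sum_mixture (hP : ∑ x, P x = 1) (hQ : ∑ x, Q x = 1) {α : ℝ} (hα : 1 + α ≠ 0) :
    ∑ x, mixture P Q α x = 1 := by
  simp only [mixture, ← sum_div, sum_add_distrib, ← mul_sum, hP, hQ, mul_one, add_comm α,
    div_self hα]

lemma gjs_eq_gjs_add_kl_add_kl (hP : ∀ x, 0 ≤ P x) (hQ : ∀ x, 0 ≤ Q x) {a b : ℝ}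
    (ha : 0 ≤ a) (hb : 0 < b) :
    GJS P Q b = GJS P Q a + (b - a) * KL P (mixture P Q b)
      + (1 + a) * KL (mixture P Q a) (mixture P Q b) := by
  set Ma := mixture P Q a
  set Mb := mixture P Q b
  have hMa x (h : Ma x = 0) := (mixture_eq_zero_iff ha (hP x) (hQ x)).1 h
  have hMb x (h : Mb x = 0) := (mixture_eq_zero_iff hb.le (hP x) (hQ x)).1 h
  have hP_part : a * (KL P Mb - KL P Ma) = a * ∑ x, P x * log (Ma x / Mb x) := by
    rcases ha.eq_or_lt with rfl | ha
    · simp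
    rw [kl_sub_kl (fun x h => (eq_zero_and_eq_zero_of_mixture_eq_zero hb (hP x) (hQ x) h).1)
      (fun x h => (eq_zero_and_eq_zero_of_mixture_eq_zero ha (hP x) (hQ x) h).1)]
  have hQ_part : KL Q Mb - KL Q Ma = ∑ x, Q x * log (Ma x / Mb x) :=
    kl_sub_kl (fun x h => (hMb x h).2) (fun x h => (hMa x h).2)
  have hM_part : (1 + a) * KL Ma Mb
      = a * ∑ x, P x * log (Ma x / Mb x) + ∑ x, Q x * log (Ma x / Mb x) := by
    rw [KL, mul_sum, mul_sum, ← sum_add_distrib]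
    refine sum_congr rfl fun x _ => ?_
    rw [← mul_assoc, one_add_mul_mixture (by linarith)]
    ring
  rw [gjs_eq, gjs_eq, hM_part]
  linear_combination hP_part + hQ_part

end GJS

theorem gjs_mono_alpha [Fintype X] (P Q : X → ℝ) (hP : IsProb P) (hQ : IsProb Q) :
    ∀ a b : ℝ, 0 ≤ a → a ≤ b → GJS P Q a ≤ GJS P Q b := by
  intro a b ha hab
  rcases hab.eq_or_lt with rfl | hab
  · rfl
  have hb := ha.trans_lt hab
  obtain ⟨hP₀, hP₁⟩ := hP
  obtain ⟨hQ₀, hQ₁⟩ := hQ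
  have hMb x (h : mixture P Q b x = 0) :=
    eq_zero_and_eq_zero_of_mixture_eq_zero hb (hP₀ x) (hQ₀ x) h
  have hMb₀ x := mixture_nonneg hb.le (hP₀ x) (hQ₀ x)
  have hMb₁ := sum_mixture hP₁ hQ₁ (by linarith : 1 + b ≠ 0)
  have hP_Mb : 0 ≤ KL P (mixture P Q b) :=
    kl_nonneg hP₀ hMb₀ (fun x h => (hMb x h).1) (by rw [hMb₁, hP₁])
  have hMa_Mb : 0 ≤ KL (mixture P Q a) (mixture P Q b) :=
    kl_nonneg (fun x => mixture_nonneg ha (hP₀ x) (hQ₀ x)) hMb₀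
      (fun x h => by simp [mixture, (hMb x h).1, (hMb x h).2])
      (by rw [hMb₁, sum_mixture hP₁ hQ₁ (by linarith)])
  rw [gjs_eq_gjs_add_kl_add_kl hP₀ hQ₀ ha hb]
  linarith [mul_nonneg (sub_nonneg.2 hab.le) hP_Mb,
    mul_nonneg (by linarith : (0 : ℝ) ≤ 1 + a) hMa_Mb]
end

section
/- The false-reject exponent function Ω_i(λ, P_N, P_A) := min over j ≠ i and tuples Q ∈ P(X)^M with G_j(Q) ≤ λ of [D(Q_i‖P_A) + Σ_{t≠i} D(Q_t‖P_N)] is non-increasing in λ ≥ 0; it equals 0 whenever λ ≥ GJS(P_N, P_A, M−2); and at λ = 0 it attains its maximum value Ω_i(0,P_N,P_A) = D_{(M−2)/(M−1)}(P_N‖P_A). -/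
open Real Finset Filter

open scoped Classical

variable {X : Type*}

noncomputable def OmegaFn [Fintype X] {M : ℕ} (i : Fin M) (lam : ℝ) (PN PA : X → ℝ) : ℝ :=
  sInf {v : ℝ | ∃ j : Fin M, j ≠ i ∧ ∃ Q : Fin M → X → ℝ, (∀ m, IsProb (Q m)) ∧
      scoreG Q j ≤ lam ∧ v = KL (Q i) PA + ∑ t ∈ Finset.univ.erase i, KL (Q t) PN}

/-! ### Auxiliary lemmas -/

lemma log_flip {a b : ℝ} (ha : 0 < a) (hb : 0 < b) :
    Real.log (a / b) = - Real.log (b / a) := by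
  rw [← Real.log_inv]; congr 1; field_simp

lemma key_le {a b : ℝ} (ha : 0 < a) (hb : 0 < b) : a - b ≤ a * Real.log (a / b) := by
  have h := Real.log_le_sub_one_of_pos (show 0 < b / a by positivity)
  have h5 : a * Real.log (b / a) ≤ a * (b / a - 1) := mul_le_mul_of_nonneg_left h ha.le
  have h6 : a * (b / a - 1) = b - a := by field_simp
  rw [log_flip ha hb]
  nlinarith

lemma key_eq {a b : ℝ} (ha : 0 < a) (hb : 0 < b) (h : a * Real.log (a / b) = a - b) :
    a = b := by
  by_contra hne
  have h1 : b / a ≠ 1 := by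
    intro hc
    exact hne ((div_eq_one_iff_eq ha.ne').mp hc).symm
  have hlt := Real.log_lt_sub_one_of_pos (show 0 < b / a by positivity) h1
  have h5 : a * Real.log (b / a) < a * (b / a - 1) := (mul_lt_mul_iff_right₀ ha).mpr hlt
  have h6 : a * (b / a - 1) = b - a := by field_simp
  rw [log_flip ha hb] at h
  nlinarith

lemma kl_decomp [Fintype X] (P R : X → ℝ) (hP : IsProb P) :
    KL P R = (1 - ∑ x, R x) +
      ∑ x, (if 0 < P x then P x * Real.log (P x / R x) - (P x - R x) else R x) := by
  have h1 : ∑ x, (if 0 < P x then P x * Real.log (P x / R x) - (P x - R x) else R x)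
      = KL P R - ∑ x, (if 0 < P x then P x - R x else - R x) := by
    rw [KL, ← Finset.sum_sub_distrib]
    apply Finset.sum_congr rfl
    intro x _
    by_cases h : 0 < P x
    · simp [h]
    · have hz : P x = 0 := le_antisymm (not_lt.mp h) (hP.1 x)
      simp [h, hz]
  have h2 : ∑ x, (if 0 < P x then P x - R x else - R x) = 1 - ∑ x, R x := by
    have : ∀ x : X, (if 0 < P x then P x - R x else - R x) = P x - R x := by
      intro x
      by_cases h : 0 < P x
      · simp [h]
      · have hz : P x = 0 := le_antisymm (not_lt.mp h) (hP.1 x)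
        simp [h, hz]
    simp only [this, Finset.sum_sub_distrib, hP.2]
  rw [h1, h2]; ring

lemma gibbs_nonneg [Fintype X] {P R : X → ℝ} (hP : IsProb P) (hR0 : ∀ x, 0 ≤ R x)
    (hsupp : ∀ x, 0 < P x → 0 < R x) (hRsum : ∑ x, R x ≤ 1) : 0 ≤ KL P R := by
  rw [kl_decomp P R hP]
  have h1 : 0 ≤ ∑ x, (if 0 < P x then P x * Real.log (P x / R x) - (P x - R x) else R x) := by
    apply Finset.sum_nonneg
    intro x _
    by_cases h : 0 < P x
    · simp only [h, if_true]
      linarith [key_le h (hsupp x h)]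
    · simp [h, hR0 x]
  linarith

lemma gibbs_eq [Fintype X] {P R : X → ℝ} (hP : IsProb P) (hR0 : ∀ x, 0 ≤ R x)
    (hsupp : ∀ x, 0 < P x → 0 < R x) (hRsum : ∑ x, R x = 1) (hKL : KL P R ≤ 0) : P = R := by
  have hd := kl_decomp P R hP
  rw [hRsum] at hd
  have hnn : ∀ x ∈ Finset.univ,
      0 ≤ (if 0 < P x then P x * Real.log (P x / R x) - (P x - R x) else R x) := by
    intro x _
    by_cases h : 0 < P x
    · simp only [h, if_true]; linarith [key_le h (hsupp x h)]
    · simp [h, hR0 x]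
  have hsum0 : ∑ x, (if 0 < P x then P x * Real.log (P x / R x) - (P x - R x) else R x) = 0 := by
    have h1 : 0 ≤ ∑ x, (if 0 < P x then P x * Real.log (P x / R x) - (P x - R x) else R x) :=
      Finset.sum_nonneg hnn
    linarith [hd, hKL]
  have hall := (Finset.sum_eq_zero_iff_of_nonneg hnn).mp hsum0
  funext x
  have hx := hall x (Finset.mem_univ x)
  by_cases h : 0 < P x
  · simp only [h, if_true] at hx
    exact key_eq h (hsupp x h) (by linarith)
  · have hz : P x = 0 := le_antisymm (not_lt.mp h) (hP.1 x)
    simp only [h, if_false] at hx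
    rw [hz, hx]

lemma kl_self [Fintype X] (P : X → ℝ) : KL P P = 0 := by
  apply Finset.sum_eq_zero
  intro x _
  by_cases h : P x = 0
  · simp [h]
  · rw [div_self h, Real.log_one, mul_zero]

lemma card_erase_univ {M : ℕ} (j : Fin M) : (Finset.univ.erase j).card = M - 1 := by
  rw [Finset.card_erase_of_mem (Finset.mem_univ j), Finset.card_univ, Fintype.card_fin]

lemma avg_prob [Fintype X] {M : ℕ} (hM : 3 ≤ M) (Q : Fin M → X → ℝ)
    (hQ : ∀ m, IsProb (Q m)) (j : Fin M) :
    IsProb (fun x => (∑ l ∈ Finset.univ.erase j, Q l x) / ((M : ℝ) - 1)) := by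
  have hMpos : (0:ℝ) < (M:ℝ) - 1 := by
    have : (3:ℝ) ≤ (M:ℝ) := by exact_mod_cast hM
    linarith
  constructor
  · intro x
    apply div_nonneg _ hMpos.le
    exact Finset.sum_nonneg fun l _ => (hQ l).1 x
  · rw [← Finset.sum_div]
    rw [Finset.sum_comm]
    have : ∀ l ∈ Finset.univ.erase j, ∑ x, Q l x = 1 := fun l _ => (hQ l).2
    rw [Finset.sum_congr rfl this, Finset.sum_const, card_erase_univ, nsmul_eq_mul]
    have hcast : ((M - 1 : ℕ) : ℝ) = (M:ℝ) - 1 := by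
      have : 1 ≤ M := by omega
      push_cast [this]; ring
    rw [hcast, mul_one, div_self hMpos.ne']

lemma avg_supp [Fintype X] {M : ℕ} (hM : 3 ≤ M) (Q : Fin M → X → ℝ)
    (hQ : ∀ m, IsProb (Q m)) (j l : Fin M) (hl : l ∈ Finset.univ.erase j) (x : X)
    (hx : 0 < Q l x) :
    0 < (∑ m ∈ Finset.univ.erase j, Q m x) / ((M : ℝ) - 1) := by
  have hMpos : (0:ℝ) < (M:ℝ) - 1 := by
    have : (3:ℝ) ≤ (M:ℝ) := by exact_mod_cast hM
    linarith
  apply div_pos _ hMpos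
  have := Finset.single_le_sum (f := fun m => Q m x) (fun m _ => (hQ m).1 x) hl
  linarith

lemma force_eq [Fintype X] {M : ℕ} (hM : 3 ≤ M) (Q : Fin M → X → ℝ)
    (hQ : ∀ m, IsProb (Q m)) (j : Fin M) (h : scoreG Q j ≤ 0) :
    ∀ l, l ≠ j → Q l =
      fun x => (∑ m ∈ Finset.univ.erase j, Q m x) / ((M : ℝ) - 1) := by
  set A : X → ℝ := fun x => (∑ m ∈ Finset.univ.erase j, Q m x) / ((M : ℝ) - 1) with hA
  have hAprob : IsProb A := avg_prob hM Q hQ j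
  have hnn : ∀ l ∈ Finset.univ.erase j, 0 ≤ KL (Q l) A := by
    intro l hl
    exact gibbs_nonneg (hQ l) hAprob.1 (fun x hx => avg_supp hM Q hQ j l hl x hx)
      (le_of_eq hAprob.2)
  have hsum0 : ∑ l ∈ Finset.univ.erase j, KL (Q l) A = 0 :=
    le_antisymm h (Finset.sum_nonneg hnn)
  have hall := (Finset.sum_eq_zero_iff_of_nonneg hnn).mp hsum0
  intro l hl
  have hlmem : l ∈ Finset.univ.erase j := Finset.mem_erase.mpr ⟨hl, Finset.mem_univ l⟩
  exact gibbs_eq (hQ l) hAprob.1 (fun x hx => avg_supp hM Q hQ j l hlmem x hx)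
    hAprob.2 (le_of_eq (hall l hlmem))

lemma kl_combine [Fintype X] (c β : ℝ) (hc0 : 0 < c) (hcβ : c * β = c - 1)
    (hcβ' : c * (1 - β) = 1) (PN PA Q : X → ℝ)
    (hPNpos : ∀ x, 0 < PN x) (hPApos : ∀ x, 0 < PA x) (hQ0 : ∀ x, 0 ≤ Q x)
    (hQ1 : ∑ x, Q x = 1)
    (hS : 0 < ∑ x, PN x ^ β * PA x ^ (1 - β)) :
    KL Q PA + (c - 1) * KL Q PN =
      c * KL Q (fun x => PN x ^ β * PA x ^ (1 - β) /
        (∑ y, PN y ^ β * PA y ^ (1 - β)))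
      - c * Real.log (∑ x, PN x ^ β * PA x ^ (1 - β)) := by
  set S : ℝ := ∑ x, PN x ^ β * PA x ^ (1-β) with hSdef
  set R : X → ℝ := fun x => PN x ^ β * PA x ^ (1-β) / S with hRdef
  have key : ∀ x : X, Q x * Real.log (Q x / PA x) + (c-1) * (Q x * Real.log (Q x / PN x))
      = c * (Q x * Real.log (Q x / R x)) - c * Real.log S * Q x := by
    intro x
    by_cases hq : Q x = 0
    · simp [hq]
    have hqpos : 0 < Q x := lt_of_le_of_ne (hQ0 x) (Ne.symm hq)
    have hRpos : 0 < R x := by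
      rw [hRdef]
      exact div_pos (mul_pos (Real.rpow_pos_of_pos (hPNpos x) _)
        (Real.rpow_pos_of_pos (hPApos x) _)) hS
    have hlogR : Real.log (R x) = β * Real.log (PN x) + (1-β) * Real.log (PA x)
        - Real.log S := by
      rw [hRdef]
      rw [Real.log_div (mul_pos (Real.rpow_pos_of_pos (hPNpos x) _)
          (Real.rpow_pos_of_pos (hPApos x) _)).ne' hS.ne',
        Real.log_mul (Real.rpow_pos_of_pos (hPNpos x) _).ne'
          (Real.rpow_pos_of_pos (hPApos x) _).ne',
        Real.log_rpow (hPNpos x), Real.log_rpow (hPApos x)]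
    rw [Real.log_div hq (hPApos x).ne', Real.log_div hq (hPNpos x).ne',
      Real.log_div hq hRpos.ne', hlogR]
    linear_combination (Q x * Real.log (PN x)) * hcβ + (Q x * Real.log (PA x)) * hcβ'
  have hsum : ∑ x, (Q x * Real.log (Q x / PA x) + (c-1) * (Q x * Real.log (Q x / PN x)))
      = ∑ x, (c * (Q x * Real.log (Q x / R x)) - c * Real.log S * Q x) :=
    Finset.sum_congr rfl fun x _ => key x
  rw [Finset.sum_add_distrib, ← Finset.mul_sum, Finset.sum_sub_distrib, ← Finset.mul_sum,
    ← Finset.mul_sum, hQ1, mul_one] at hsum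
  simpa [KL] using hsum

lemma split_sum {M : ℕ} (hM : 3 ≤ M) (a b : Fin M) (hab : b ≠ a)
    (f : Fin M → ℝ) (P : ℝ) (hf : ∀ t, t ≠ a → t ≠ b → f t = P) :
    ∑ t ∈ Finset.univ.erase a, f t = f b + ((M:ℝ) - 2) * P := by
  have hba : b ∈ Finset.univ.erase a := Finset.mem_erase.mpr ⟨hab, Finset.mem_univ b⟩
  rw [← Finset.add_sum_erase _ f hba]
  congr 1
  have h1 : ∀ t ∈ (Finset.univ.erase a).erase b, f t = P := by
    intro t ht
    have h2 := Finset.mem_erase.mp ht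
    have h3 := Finset.mem_erase.mp h2.2
    exact hf t h3.1 h2.1
  rw [Finset.sum_congr rfl h1, Finset.sum_const, nsmul_eq_mul]
  have hcard : ((Finset.univ.erase a).erase b).card = M - 2 := by
    rw [Finset.card_erase_of_mem hba, card_erase_univ]
    omega
  rw [hcard]
  congr 1
  rw [Nat.cast_sub (by omega : 2 ≤ M)]
  norm_num

lemma mem_set [Fintype X] {M : ℕ} (hM : 3 ≤ M) (i : Fin M) (PN PA P : X → ℝ)
    (hPN : IsProb PN) (hP : IsProb P) (lam : ℝ) (hlam : 0 ≤ lam) :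
    KL P PA + ((M : ℝ) - 2) * KL P PN ∈
      {v : ℝ | ∃ j : Fin M, j ≠ i ∧ ∃ Q : Fin M → X → ℝ, (∀ m, IsProb (Q m)) ∧
        scoreG Q j ≤ lam ∧ v = KL (Q i) PA + ∑ t ∈ Finset.univ.erase i, KL (Q t) PN} := by
  obtain ⟨j, hj⟩ := Fintype.exists_ne_of_one_lt_card (by simp; omega) i
  set Q : Fin M → X → ℝ := fun m => if m = j then PN else P with hQdef
  have hQprob : ∀ m, IsProb (Q m) := by
    intro m
    by_cases h : m = j <;> simp [hQdef, h, hPN, hP]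
  have hcast : ((M - 1 : ℕ) : ℝ) = (M:ℝ) - 1 := by
    rw [Nat.cast_sub (by omega : 1 ≤ M)]; norm_num
  have hMpos : (0:ℝ) < (M:ℝ) - 1 := by
    have : (3:ℝ) ≤ (M:ℝ) := by exact_mod_cast hM
    linarith
  have hQi : Q i = P := by simp [hQdef, Ne.symm hj]
  have hQj : Q j = PN := by simp [hQdef]
  have havg : (fun x => (∑ l ∈ Finset.univ.erase j, Q l x) / ((M:ℝ) - 1)) = P := by
    funext x
    have h1 : ∀ l ∈ Finset.univ.erase j, Q l x = P x := by
      intro l hl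
      simp [hQdef, (Finset.mem_erase.mp hl).1]
    rw [Finset.sum_congr rfl h1, Finset.sum_const, card_erase_univ, nsmul_eq_mul, hcast]
    field_simp
  have hscore : scoreG Q j = 0 := by
    rw [scoreG, havg]
    apply Finset.sum_eq_zero
    intro l hl
    rw [show Q l = P by simp [hQdef, (Finset.mem_erase.mp hl).1], kl_self]
  refine ⟨j, hj, Q, hQprob, by rw [hscore]; exact hlam, ?_⟩
  rw [hQi]
  congr 1
  rw [split_sum hM i j hj (fun t => KL (Q t) PN) (KL P PN)
    (fun t ht htj => by show KL (Q t) PN = KL P PN; rw [show Q t = P by simp [hQdef, htj]]), hQj, kl_self, zero_add]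

lemma set_nonneg [Fintype X] {M : ℕ} (i : Fin M) (PN PA : X → ℝ) (hPN : IsProb PN)
    (hPA : IsProb PA) (hPNpos : ∀ x, 0 < PN x) (hPApos : ∀ x, 0 < PA x) (lam : ℝ) :
    ∀ v ∈ {v : ℝ | ∃ j : Fin M, j ≠ i ∧ ∃ Q : Fin M → X → ℝ, (∀ m, IsProb (Q m)) ∧
        scoreG Q j ≤ lam ∧ v = KL (Q i) PA + ∑ t ∈ Finset.univ.erase i, KL (Q t) PN},
      0 ≤ v := by
  rintro v ⟨j, hj, Q, hQ, hsc, rfl⟩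
  have h1 : 0 ≤ KL (Q i) PA :=
    gibbs_nonneg (hQ i) hPA.1 (fun x _ => hPApos x) (le_of_eq hPA.2)
  have h2 : 0 ≤ ∑ t ∈ Finset.univ.erase i, KL (Q t) PN :=
    Finset.sum_nonneg fun t _ =>
      gibbs_nonneg (hQ t) hPN.1 (fun x _ => hPNpos x) (le_of_eq hPN.2)
  linarith

theorem omega_properties [Fintype X] {M : ℕ} (hM : 3 ≤ M) (i : Fin M)
    (PN PA : X → ℝ) (hPN : IsProb PN) (hPA : IsProb PA)
    (hPNpos : ∀ x, 0 < PN x) (hPApos : ∀ x, 0 < PA x) :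
    (∀ l₁ l₂ : ℝ, 0 ≤ l₁ → l₁ ≤ l₂ → OmegaFn i l₂ PN PA ≤ OmegaFn i l₁ PN PA) ∧
    (∀ lam : ℝ, GJS PN PA ((M : ℝ) - 2) ≤ lam → OmegaFn i lam PN PA = 0) ∧
    OmegaFn i 0 PN PA = Renyi (((M : ℝ) - 2) / ((M : ℝ) - 1)) PN PA := by
  have hM3 : (3:ℝ) ≤ (M:ℝ) := by exact_mod_cast hM
  have hc0 : (0:ℝ) < (M:ℝ) - 1 := by linarith
  have hbdd : ∀ lam : ℝ, BddBelow {v : ℝ | ∃ j : Fin M, j ≠ i ∧ ∃ Q : Fin M → X → ℝ,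
      (∀ m, IsProb (Q m)) ∧ scoreG Q j ≤ lam ∧
      v = KL (Q i) PA + ∑ t ∈ Finset.univ.erase i, KL (Q t) PN} :=
    fun lam => ⟨0, fun v hv => set_nonneg i PN PA hPN hPA hPNpos hPApos lam v hv⟩
  refine ⟨?_, ?_, ?_⟩
  · -- monotonicity
    intro l₁ l₂ h0 h12
    simp only [OmegaFn]
    apply csInf_le_csInf (hbdd l₂)
    · exact ⟨_, mem_set hM i PN PA PN hPN hPN l₁ h0⟩
    · rintro v ⟨j, hj, Q, hQ, hsc, hveq⟩
      exact ⟨j, hj, Q, hQ, hsc.trans h12, hveq⟩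
  · -- value 0 for large lam
    intro lam hlam
    -- GJS is nonnegative
    set g : X → ℝ := fun x => (((M:ℝ) - 2) * PN x + PA x) / (1 + ((M:ℝ) - 2)) with hgdef
    have hgpos : ∀ x, 0 < g x := by
      intro x
      rw [hgdef]
      have := hPNpos x
      have := hPApos x
      apply div_pos <;> nlinarith
    have hgsum : ∑ x, g x = 1 := by
      rw [hgdef]
      simp only
      rw [← Finset.sum_div, Finset.sum_add_distrib, ← Finset.mul_sum, hPN.2, hPA.2]
      rw [div_eq_one_iff_eq (ne_of_gt (by linarith : (0:ℝ) < 1 + ((M:ℝ) - 2)))]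
      ring
    have hgprob : IsProb g := ⟨fun x => (hgpos x).le, hgsum⟩
    have hGJS : 0 ≤ GJS PN PA ((M:ℝ) - 2) := by
      rw [GJS]
      have h1 : 0 ≤ KL PN g :=
        gibbs_nonneg hPN hgprob.1 (fun x _ => hgpos x) (le_of_eq hgsum)
      have h2 : 0 ≤ KL PA g :=
        gibbs_nonneg hPA hgprob.1 (fun x _ => hgpos x) (le_of_eq hgsum)
      have h3 : (0:ℝ) ≤ (M:ℝ) - 2 := by linarith
      have hrw : (fun x => (((M:ℝ) - 2) * PN x + PA x) / (1 + ((M:ℝ) - 2))) = g := rfl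
      rw [hrw]
      nlinarith
    have hlam0 : 0 ≤ lam := le_trans hGJS hlam
    -- membership of 0
    obtain ⟨j, hj⟩ := Fintype.exists_ne_of_one_lt_card (by simp; omega) i
    set Q : Fin M → X → ℝ := fun m => if m = i then PA else PN with hQdef
    have hQprob : ∀ m, IsProb (Q m) := by
      intro m
      by_cases h : m = i <;> simp [hQdef, h, hPN, hPA]
    have hQi : Q i = PA := by simp [hQdef]
    have havg : (fun x => (∑ l ∈ Finset.univ.erase j, Q l x) / ((M:ℝ) - 1)) = g := by
      funext x
      rw [split_sum hM j i (Ne.symm hj) (fun l => Q l x) (PN x)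
        (fun t htj hti => by show Q t x = PN x; simp [hQdef, hti]), hQi, hgdef]
      have : (1:ℝ) + ((M:ℝ) - 2) = (M:ℝ) - 1 := by ring
      rw [this]
      ring_nf
    have hscore : scoreG Q j = GJS PN PA ((M:ℝ) - 2) := by
      rw [scoreG, havg, GJS]
      rw [split_sum hM j i (Ne.symm hj) (fun l => KL (Q l) g) (KL PN g)
        (fun t htj hti => by show KL (Q t) g = KL PN g; rw [show Q t = PN by simp [hQdef, hti]]), hQi]
      ring
    have h0mem : (0:ℝ) ∈ {v : ℝ | ∃ j : Fin M, j ≠ i ∧ ∃ Q : Fin M → X → ℝ,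
        (∀ m, IsProb (Q m)) ∧ scoreG Q j ≤ lam ∧
        v = KL (Q i) PA + ∑ t ∈ Finset.univ.erase i, KL (Q t) PN} := by
      refine ⟨j, hj, Q, hQprob, by rw [hscore]; exact hlam, ?_⟩
      rw [hQi, kl_self]
      rw [Finset.sum_eq_zero (fun t ht => by
        rw [show Q t = PN by simp [hQdef, (Finset.mem_erase.mp ht).1], kl_self])]
      norm_num
    simp only [OmegaFn]
    exact le_antisymm (csInf_le (hbdd lam) h0mem)
      (le_csInf ⟨0, h0mem⟩ (set_nonneg i PN PA hPN hPA hPNpos hPApos lam))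
  · -- value at 0
    set β : ℝ := ((M:ℝ) - 2) / ((M:ℝ) - 1) with hβdef
    have hcβ : ((M:ℝ) - 1) * β = ((M:ℝ) - 1) - 1 := by
      rw [hβdef]; field_simp; ring
    have hcβ' : ((M:ℝ) - 1) * (1 - β) = 1 := by
      rw [hβdef]; field_simp; norm_num
    have hXne : Nonempty X := by
      by_contra h
      rw [not_nonempty_iff] at h
      have h2 := hPN.2
      rw [Finset.univ_eq_empty, Finset.sum_empty] at h2
      norm_num at h2
    set S : ℝ := ∑ x, PN x ^ β * PA x ^ (1 - β) with hSdef
    have hS : 0 < S := by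
      rw [hSdef]
      apply Finset.sum_pos
      · intro x _
        exact mul_pos (Real.rpow_pos_of_pos (hPNpos x) _) (Real.rpow_pos_of_pos (hPApos x) _)
      · exact Finset.univ_nonempty
    set R : X → ℝ := fun x => PN x ^ β * PA x ^ (1 - β) / S with hRdef
    have hRpos : ∀ x, 0 < R x := fun x =>
      div_pos (mul_pos (Real.rpow_pos_of_pos (hPNpos x) _)
        (Real.rpow_pos_of_pos (hPApos x) _)) hS
    have hRprob : IsProb R := by
      constructor
      · exact fun x => (hRpos x).le
      · rw [hRdef]
        simp only
        rw [← Finset.sum_div, ← hSdef, div_self hS.ne']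
    have hcomb : ∀ P0 : X → ℝ, IsProb P0 →
        KL P0 PA + (((M:ℝ) - 1) - 1) * KL P0 PN = ((M:ℝ) - 1) * KL P0 R
          - ((M:ℝ) - 1) * Real.log S := by
      intro P0 hP0
      have := kl_combine ((M:ℝ) - 1) β hc0 hcβ hcβ' PN PA P0 hPNpos hPApos hP0.1 hP0.2
        (by rw [← hSdef]; exact hS)
      rw [hRdef]
      convert this using 4 <;> rw [hSdef]
    have hRenyi : Renyi β PN PA = -(((M:ℝ) - 1) * Real.log S) := by
      rw [Renyi, ← hSdef]
      have hβ1 : (1:ℝ) / (β - 1) = -((M:ℝ) - 1) := by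
        rw [hβdef]
        rw [div_eq_iff]
        · field_simp
          ring
        · intro hcon
          have : (M:ℝ) - 2 = (M:ℝ) - 1 := by
            field_simp at hcon
            linarith [hcon]
          linarith
      rw [hβ1]
      ring
    have hCval : KL R PA + ((M:ℝ) - 2) * KL R PN = -(((M:ℝ) - 1) * Real.log S) := by
      have h := hcomb R hRprob
      rw [kl_self] at h
      have : ((M:ℝ) - 1) - 1 = (M:ℝ) - 2 := by ring
      rw [this] at h
      linarith [h]
    have hCmem : -(((M:ℝ) - 1) * Real.log S) ∈ {v : ℝ | ∃ j : Fin M, j ≠ i ∧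
        ∃ Q : Fin M → X → ℝ, (∀ m, IsProb (Q m)) ∧ scoreG Q j ≤ 0 ∧
        v = KL (Q i) PA + ∑ t ∈ Finset.univ.erase i, KL (Q t) PN} := by
      rw [← hCval]
      exact mem_set hM i PN PA R hPN hRprob 0 le_rfl
    have hlb : ∀ v ∈ {v : ℝ | ∃ j : Fin M, j ≠ i ∧ ∃ Q : Fin M → X → ℝ,
        (∀ m, IsProb (Q m)) ∧ scoreG Q j ≤ 0 ∧
        v = KL (Q i) PA + ∑ t ∈ Finset.univ.erase i, KL (Q t) PN},
        -(((M:ℝ) - 1) * Real.log S) ≤ v := by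
      rintro v ⟨j, hj, Q, hQ, hsc, rfl⟩
      have hforce := force_eq hM Q hQ j hsc
      set A : X → ℝ := fun x => (∑ m ∈ Finset.univ.erase j, Q m x) / ((M:ℝ) - 1) with hAdef
      have hAprob : IsProb A := avg_prob hM Q hQ j
      have hQiA : Q i = A := hforce i (Ne.symm hj)
      have hsplit : ∑ t ∈ Finset.univ.erase i, KL (Q t) PN
          = KL (Q j) PN + ((M:ℝ) - 2) * KL A PN := by
        exact split_sum hM i j hj (fun t => KL (Q t) PN) (KL A PN)
          (fun t hti htj => by show KL (Q t) PN = KL A PN; rw [hforce t htj])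
      rw [hQiA, hsplit]
      have h1 : 0 ≤ KL (Q j) PN :=
        gibbs_nonneg (hQ j) hPN.1 (fun x _ => hPNpos x) (le_of_eq hPN.2)
      have h2 : 0 ≤ KL A R :=
        gibbs_nonneg hAprob hRprob.1 (fun x _ => hRpos x) (le_of_eq hRprob.2)
      have h3 := hcomb A hAprob
      nlinarith [h3]
    simp only [OmegaFn]
    rw [hRenyi]
    exact le_antisymm (csInf_le (hbdd 0) hCmem) (le_csInf ⟨_, hCmem⟩ hlb)
end
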